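/- The map Z[1/2] → C(Ω,Z)/{f − f∘τ} sending 2^{−n} to the class of the characteristic function of 2ⁿΩ is a well-defined group homomorphism and is inverse to the integration map; in particular the coinvariant group is torsion-free and 2-divisible. -/

import Mathlib

open MeasureTheory

/-- The set `2ⁿΩ + k` inside the dyadic integers. -/
def dyadicBall (n : ℕ) (k : ℤ_[2]) : Set ℤ_[2] := {x | ∃ y, x = 2 ^ n * y + k}

/-- The subgroup `ℤ[1/2]` of `ℝ` of dyadic rationals (generated by the `2⁻ⁿ`). -/
noncomputable def dyadicSubgroup : AddSubgroup ℝ :=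
  AddSubgroup.closure {x : ℝ | ∃ n : ℕ, x = ((2 : ℝ) ^ n)⁻¹}

/-- The odometer `x ↦ x + 1` on the dyadic integers, as a continuous map. -/
noncomputable def tau : C(ℤ_[2], ℤ_[2]) := ⟨fun x => x + 1, by continuity⟩

/-- The subgroup of `C(Ω, ℤ)` generated by the elements `f - f ∘ τ`. -/
noncomputable def coinvRel : AddSubgroup C(ℤ_[2], ℤ) :=
  AddSubgroup.closure {g | ∃ f : C(ℤ_[2], ℤ), g = f - f.comp tau}

/-!
A continuous `f : ℤ_[2] → ℤ` is uniformly continuous, so it factors through `ℤ/2ⁿ` for some `n`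
and is an integer combination of indicators of cosets of `2ⁿℤ_[2]`. Since `τ` permutes these
cosets cyclically, they all have the same class modulo coboundaries, so the class of `f` is
`(∑_{k < 2ⁿ} f k) • [χ_{2ⁿΩ}]`. Integration against the Haar measure kills coboundaries and sends
`[χ_{2ⁿΩ}]` to `2⁻ⁿ`; hence it is injective on coinvariants, with image `ℤ[1/2]`. Comparing
integrals gives `[χ_{2ⁿΩ}] = 2 • [χ_{2ⁿ⁺¹Ω}]`, whence `2`-divisibility.
-/

section IntegralAddHom

variable {X : Type*} [TopologicalSpace X] [CompactSpace X] [MeasurableSpace X]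
  [OpensMeasurableSpace X] (μ : Measure X) [IsFiniteMeasure μ]

theorem ContinuousMap.integrable_intCast (f : C(X, ℤ)) : Integrable (fun x => (f x : ℝ)) μ :=
  (continuous_of_discreteTopology.comp f.continuous).integrable_of_hasCompactSupport
    (HasCompactSupport.of_compactSpace _)

noncomputable def integralAddHom : C(X, ℤ) →+ ℝ where
  toFun f := ∫ x, (f x : ℝ) ∂μ
  map_zero' := by simp
  map_add' f g := by
    simpa using integral_add (f.integrable_intCast μ) (g.integrable_intCast μ)

theorem integralAddHom_apply (f : C(X, ℤ)) : integralAddHom μ f = ∫ x, (f x : ℝ) ∂μ := rfl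

end IntegralAddHom

namespace PadicInt

variable {p : ℕ} [Fact p.Prime]

theorem toZModPow_eq_iff_norm_sub_le {n : ℕ} {x y : ℤ_[p]} :
    toZModPow n x = toZModPow n y ↔ ‖x - y‖ ≤ (p : ℝ) ^ (-n : ℤ) := by
  rw [← sub_eq_zero, ← map_sub, ← RingHom.mem_ker, ker_toZModPow, norm_le_pow_iff_mem_span_pow]

theorem isLocallyConstant_toZModPow (n : ℕ) : IsLocallyConstant (toZModPow n : ℤ_[p] → _) := by
  have hr : 0 < (p : ℝ) ^ (-n : ℤ) := zpow_pos (Nat.cast_pos.2 (Fact.out : p.Prime).pos) _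
  refine (IsLocallyConstant.iff_eventually_eq _).2 fun x => ?_
  filter_upwards [Metric.ball_mem_nhds x hr] with y hy
  exact toZModPow_eq_iff_norm_sub_le.2 (mem_ball_iff_norm.1 hy).le

theorem exists_eq_comp_toZModPow (f : C(ℤ_[p], ℤ)) :
    ∃ (n : ℕ) (g : ZMod (p ^ n) → ℤ), ∀ x, f x = g (toZModPow n x) := by
  obtain ⟨δ, hδ, hf⟩ := f.uniform_continuity 1 one_pos
  obtain ⟨n, hn⟩ := exists_pow_neg_lt p hδ
  have hsurj := ZMod.ringHom_surjective (toZModPow n : ℤ_[p] →+* ZMod (p ^ n))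
  refine ⟨n, f ∘ Function.surjInv hsurj, fun x => ?_⟩
  by_contra hne
  refine (hf ?_).not_ge (Int.pairwise_one_le_dist hne)
  rw [dist_eq_norm]
  exact (toZModPow_eq_iff_norm_sub_le.1 (Function.surjInv_eq hsurj _).symm).trans_lt hn

noncomputable def fiberIndicator (p : ℕ) [Fact p.Prime] (n : ℕ) (a : ZMod (p ^ n)) :
    C(ℤ_[p], ℤ) :=
  ⟨Pi.single a 1 ∘ toZModPow n, ((isLocallyConstant_toZModPow n).comp _).continuous⟩

theorem eq_sum_smul_fiberIndicator {n : ℕ} {f : C(ℤ_[p], ℤ)} {g : ZMod (p ^ n) → ℤ}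
    (hf : ∀ x, f x = g (toZModPow n x)) : f = ∑ a, g a • fiberIndicator p n a := by
  ext x
  simp [hf, fiberIndicator, Pi.single_apply]

section Measure

variable [MeasurableSpace ℤ_[p]] [BorelSpace ℤ_[p]]
  (μ : Measure ℤ_[p]) [IsProbabilityMeasure μ] [μ.IsAddLeftInvariant]

theorem measurableSet_toZModPow_preimage (n : ℕ) (s : Set (ZMod (p ^ n))) :
    MeasurableSet (toZModPow n ⁻¹' s : Set ℤ_[p]) :=
  (isLocallyConstant_toZModPow n s).measurableSet

theorem measureReal_toZModPow_preimage_singleton (n : ℕ) (a : ZMod (p ^ n)) :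
    μ.real (toZModPow n ⁻¹' {a}) = ((p : ℝ) ^ n)⁻¹ := by
  have translate : ∀ b, μ.real (toZModPow n ⁻¹' {b}) = μ.real (toZModPow n ⁻¹' {a}) := by
    intro b
    obtain ⟨c, hc⟩ := ZMod.ringHom_surjective (toZModPow n : ℤ_[p] →+* _) (a - b)
    have : toZModPow n ⁻¹' {b} = (fun x => c + x) ⁻¹' (toZModPow n ⁻¹' {a}) := by
      ext x
      simp [hc, ← eq_sub_iff_add_eq']
    rw [this, measureReal_def, measure_preimage_add, ← measureReal_def]
  have total : ∑ b, μ.real (toZModPow n ⁻¹' {b}) = 1 := by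
    rw [sum_measureReal_preimage_singleton _ fun b _ => measurableSet_toZModPow_preimage n _,
      Finset.coe_univ, Set.preimage_univ, probReal_univ]
  rw [Finset.sum_congr rfl fun b _ => translate b, Finset.sum_const, Finset.card_univ,
    ZMod.card, nsmul_eq_mul] at total
  push_cast at total
  exact eq_inv_of_mul_eq_one_right total

theorem integralAddHom_fiberIndicator (n : ℕ) (a : ZMod (p ^ n)) :
    integralAddHom μ (fiberIndicator p n a) = ((p : ℝ) ^ n)⁻¹ := by
  have : (fun x => (fiberIndicator p n a x : ℝ)) = (toZModPow n ⁻¹' {a}).indicator 1 := by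
    ext x
    by_cases hx : toZModPow n x = a <;> simp [fiberIndicator, hx]
  rw [integralAddHom_apply, this, integral_indicator_one (measurableSet_toZModPow_preimage n _),
    measureReal_toZModPow_preimage_singleton]

end Measure

end PadicInt

open PadicInt

theorem fiberIndicator_comp_tau (n : ℕ) (a : ZMod (2 ^ n)) :
    (fiberIndicator 2 n (a + 1)).comp tau = fiberIndicator 2 n a := by
  ext x
  simp [fiberIndicator, tau, Pi.single_apply]

theorem mk_fiberIndicator_eq (n : ℕ) (a : ZMod (2 ^ n)) :
    (fiberIndicator 2 n a : C(ℤ_[2], ℤ) ⧸ coinvRel) = fiberIndicator 2 n 0 := by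
  suffices h : ∀ m : ℕ,
      (fiberIndicator 2 n m : C(ℤ_[2], ℤ) ⧸ coinvRel) = fiberIndicator 2 n 0 by
    simpa using h a.val
  intro m
  induction m with
  | zero => simp
  | succ m ih =>
    rw [← ih, QuotientAddGroup.eq_iff_sub_mem, Nat.cast_succ]
    nth_rewrite 2 [← fiberIndicator_comp_tau]
    exact AddSubgroup.subset_closure ⟨_, rfl⟩

theorem mk_eq_zsmul_mk_fiberIndicator {n : ℕ} {f : C(ℤ_[2], ℤ)} {g : ZMod (2 ^ n) → ℤ}
    (hf : ∀ x, f x = g (toZModPow n x)) :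
    (f : C(ℤ_[2], ℤ) ⧸ coinvRel) =
      (∑ a, g a) • (fiberIndicator 2 n 0 : C(ℤ_[2], ℤ) ⧸ coinvRel) := by
  rw [eq_sum_smul_fiberIndicator hf, QuotientAddGroup.mk_sum]
  simp only [QuotientAddGroup.mk_zsmul, mk_fiberIndicator_eq, ← Finset.sum_smul]

section CoinvIntegral

variable [MeasurableSpace ℤ_[2]] [BorelSpace ℤ_[2]] (μ : Measure ℤ_[2])

theorem coinvRel_le_ker_integralAddHom [IsFiniteMeasure μ] [μ.IsAddLeftInvariant] :
    coinvRel ≤ (integralAddHom μ).ker := by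
  refine (AddSubgroup.closure_le _).2 ?_
  rintro _ ⟨f, rfl⟩
  simp only [SetLike.mem_coe, AddMonoidHom.mem_ker, map_sub, sub_eq_zero]
  exact (integral_add_right_eq_self (fun x => (f x : ℝ)) 1).symm

noncomputable def coinvIntegral [IsFiniteMeasure μ] [μ.IsAddLeftInvariant] :
    (C(ℤ_[2], ℤ) ⧸ coinvRel) →+ ℝ :=
  QuotientAddGroup.lift coinvRel (integralAddHom μ) (coinvRel_le_ker_integralAddHom μ)

variable [IsProbabilityMeasure μ] [μ.IsAddLeftInvariant]

theorem coinvIntegral_mk_fiberIndicator (n : ℕ) (a : ZMod (2 ^ n)) :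
    coinvIntegral μ (fiberIndicator 2 n a) = ((2 : ℝ) ^ n)⁻¹ := by
  exact_mod_cast integralAddHom_fiberIndicator μ n a

theorem coinvIntegral_mk_eq {n : ℕ} {f : C(ℤ_[2], ℤ)} {g : ZMod (2 ^ n) → ℤ}
    (hf : ∀ x, f x = g (toZModPow n x)) :
    coinvIntegral μ f = (∑ a, g a) • ((2 : ℝ) ^ n)⁻¹ := by
  rw [mk_eq_zsmul_mk_fiberIndicator hf, map_zsmul, coinvIntegral_mk_fiberIndicator]

theorem coinvIntegral_injective : Function.Injective (coinvIntegral μ) := by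
  refine (injective_iff_map_eq_zero _).2 fun q hq => ?_
  obtain ⟨f, rfl⟩ := QuotientAddGroup.mk_surjective q
  obtain ⟨n, g, hf⟩ := exists_eq_comp_toZModPow f
  rw [coinvIntegral_mk_eq μ hf, smul_eq_zero] at hq
  rw [mk_eq_zsmul_mk_fiberIndicator hf, hq.resolve_right (by positivity), zero_zsmul]

theorem range_coinvIntegral : (coinvIntegral μ).range = dyadicSubgroup := by
  apply le_antisymm
  · rintro _ ⟨q, rfl⟩
    obtain ⟨f, rfl⟩ := QuotientAddGroup.mk_surjective q
    obtain ⟨n, g, hf⟩ := exists_eq_comp_toZModPow f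
    rw [coinvIntegral_mk_eq μ hf]
    exact dyadicSubgroup.zsmul_mem (AddSubgroup.subset_closure ⟨n, rfl⟩) _
  · refine (AddSubgroup.closure_le _).2 ?_
    rintro _ ⟨n, rfl⟩
    exact AddMonoidHom.mem_range.2 ⟨_, coinvIntegral_mk_fiberIndicator μ n 0⟩

end CoinvIntegral

theorem two_nsmul_mk_fiberIndicator_succ [MeasurableSpace ℤ_[2]] [BorelSpace ℤ_[2]]
    (μ : Measure ℤ_[2]) [IsProbabilityMeasure μ] [μ.IsAddLeftInvariant] (n : ℕ) :
    2 • (fiberIndicator 2 (n + 1) 0 : C(ℤ_[2], ℤ) ⧸ coinvRel) = fiberIndicator 2 n 0 := by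
  apply coinvIntegral_injective μ
  rw [map_nsmul, coinvIntegral_mk_fiberIndicator, coinvIntegral_mk_fiberIndicator, pow_succ,
    nsmul_eq_mul]
  field_simp
  norm_num

theorem dyadicBall_zero_eq_preimage (n : ℕ) : dyadicBall n 0 = toZModPow n ⁻¹' {0} := by
  ext x
  rw [Set.mem_preimage, Set.mem_singleton_iff, ← RingHom.mem_ker, ker_toZModPow,
    Ideal.mem_span_singleton]
  simp [dyadicBall, Dvd.dvd]

/-- The map `ℤ[1/2] → C(Ω,ℤ)/{f - f∘τ}` sending `2⁻ⁿ` to the class of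
`χ_{2ⁿΩ}` is a well-defined group homomorphism inverse to the integration map;
in particular the coinvariant group is torsion-free and `2`-divisible. -/
theorem stmt9 [MeasurableSpace ℤ_[2]] [BorelSpace ℤ_[2]]
    (μ : Measure ℤ_[2]) [IsProbabilityMeasure μ] [μ.IsAddLeftInvariant] :
    ∃ ψ : dyadicSubgroup ≃+ (C(ℤ_[2], ℤ) ⧸ coinvRel),
      (∀ (n : ℕ) (f : C(ℤ_[2], ℤ)),
        (∀ x, f x = Set.indicator (dyadicBall n 0) (fun _ => (1 : ℤ)) x) →
        ψ ⟨((2 : ℝ) ^ n)⁻¹, AddSubgroup.subset_closure ⟨n, rfl⟩⟩ =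
          QuotientAddGroup.mk f) ∧
      (∀ f : C(ℤ_[2], ℤ),
        ((ψ.symm (QuotientAddGroup.mk f) : dyadicSubgroup) : ℝ) =
          ∫ x, (f x : ℝ) ∂μ) ∧
      (∀ (q : C(ℤ_[2], ℤ) ⧸ coinvRel) (m : ℤ), m ≠ 0 → m • q = 0 → q = 0) ∧
      (∀ q : C(ℤ_[2], ℤ) ⧸ coinvRel, ∃ q', 2 • q' = q) := by
  have hinj := coinvIntegral_injective μ
  let e := (AddMonoidHom.ofInjective hinj).trans
    (AddEquiv.addSubgroupCongr (range_coinvIntegral μ))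
  refine ⟨e.symm, fun n f hf => ?_, fun f => rfl, fun q m hm hq => ?_, fun q => ?_⟩
  · have hχ : f = fiberIndicator 2 n 0 := by
      ext x
      by_cases hx : toZModPow n x = 0 <;>
        simp [hf, dyadicBall_zero_eq_preimage, fiberIndicator, hx]
    rw [AddEquiv.symm_apply_eq, hχ]
    exact Subtype.ext (coinvIntegral_mk_fiberIndicator μ n 0).symm
  · have : m • coinvIntegral μ q = 0 := by rw [← map_zsmul, hq, map_zero]
    exact (injective_iff_map_eq_zero _).1 hinj q ((smul_eq_zero.1 this).resolve_left hm)
  · obtain ⟨f, rfl⟩ := QuotientAddGroup.mk_surjective q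
    obtain ⟨n, g, hf⟩ := exists_eq_comp_toZModPow f
    refine ⟨(∑ a, g a) • fiberIndicator 2 (n + 1) 0, ?_⟩
    rw [smul_comm, two_nsmul_mk_fiberIndicator_succ μ, mk_eq_zsmul_mk_fiberIndicator hf]
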